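/- Let E be a Dedekind complete Riesz space with weak order unit e, F a strictly positive order continuous linear projection on E with F(e) = e (a conditional expectation), and φ a positive order continuous linear functional on E with φ(e) = 1; set p(X) = φ(F(|X|)). Let X ≥ 0 in E and (P_t)_{t≥0} a family of band projections on E. Then for every ε > 0 there exists δ > 0 such that whenever p(P_t e) < δ we have p(P_t X) < ε. -/

import Mathlib

variable {E : Type*} [AddCommGroup E] [Lattice E]
  [CovariantClass E E (· + ·) (· ≤ ·)] [Module ℝ E]

/-- `E` is Dedekind complete. -/
def DedekindComplete (E : Type*) [AddCommGroup E] [Lattice E] : Prop :=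
  ∀ A : Set E, A.Nonempty → BddAbove A → ∃ s, IsLUB A s

/-- `e` is a weak order unit. -/
def IsWeakUnit (e : E) : Prop :=
  0 < e ∧ ∀ x : E, 0 ≤ x → IsLUB (Set.range fun n : ℕ => x ⊓ n • e) x

/-- A band (order) projection. -/
def IsBandProj (P : E →ₗ[ℝ] E) : Prop :=
  (∀ x, P (P x) = P x) ∧ ∀ x : E, 0 ≤ x → 0 ≤ P x ∧ P x ≤ x

/-- A conditional expectation with respect to the weak order unit `e`: a strictly
positive, (sequentially) order continuous linear projection fixing `e`. -/
def IsCondExp (e : E) (F : E →ₗ[ℝ] E) : Prop :=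
  (∀ x, F (F x) = F x) ∧ (∀ x : E, 0 < x → 0 < F x) ∧ F e = e ∧
  ∀ V : ℕ → E, Antitone V → IsGLB (Set.range V) 0 →
    IsGLB (Set.range fun n => F (V n)) 0

/-- A positive, normalized, (sequentially) order continuous functional. -/
def IsNormedFunctional (e : E) (φ : E →ₗ[ℝ] ℝ) : Prop :=
  (∀ x : E, 0 ≤ x → 0 ≤ φ x) ∧ φ e = 1 ∧
  ∀ V : ℕ → E, Antitone V → IsGLB (Set.range V) 0 →
    Filter.Tendsto (fun n => φ (V n)) Filter.atTop (nhds 0)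

/-! `x` differs from its truncation `x ⊓ n • e` by the tail `x - x ⊓ n • e`, which decreases to
`0` because `e` is a weak unit, so by order continuity `φ (F tail)` is eventually below `ε / 2`.
A band projection is positive and below the identity, so `P x ≤ (x - x ⊓ N • e) + N • P e`;
hence `φ (F (P e)) < ε / (2 (N + 1))` forces `φ (F (P x)) < ε`. -/

open Filter Topology

theorem monotone_of_map_nonneg {α β G : Type*} [AddCommGroup α] [PartialOrder α] [AddLeftMono α]
    [AddCommGroup β] [PartialOrder β] [AddLeftMono β] [FunLike G α β] [AddMonoidHomClass G α β]
    {f : G} (hf : ∀ x, 0 ≤ x → 0 ≤ f x) : Monotone f := fun x y hxy => by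
  simpa only [map_sub, sub_nonneg] using hf (y - x) (sub_nonneg.mpr hxy)

section Truncation

variable {α : Type*} [AddCommGroup α] [Lattice α] [AddLeftMono α]

theorem antitone_sub_inf_nsmul (x : α) {e : α} (he : 0 ≤ e) :
    Antitone fun n : ℕ => x - x ⊓ n • e :=
  fun _ _ hmn => sub_le_sub_left (inf_le_inf_left x (nsmul_le_nsmul_left he hmn)) x

theorem isGLB_range_sub_inf_nsmul {x e : α} (h : IsLUB (Set.range fun n : ℕ => x ⊓ n • e) x) :
    IsGLB (Set.range fun n : ℕ => x - x ⊓ n • e) 0 := by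
  refine ⟨?_, fun b hb => ?_⟩
  · rintro _ ⟨n, rfl⟩
    exact sub_nonneg.mpr inf_le_left
  · have hub : x - b ∈ upperBounds (Set.range fun n : ℕ => x ⊓ n • e) := by
      rintro _ ⟨n, rfl⟩
      exact le_sub_comm.mp (hb ⟨n, rfl⟩)
    simpa using h.2 hub

end Truncation

section BandProjection

variable {V : Type*} [AddCommGroup V] [Lattice V] [Module ℝ V]

theorem IsCondExp.map_nonneg {e : V} {F : V →ₗ[ℝ] V} (hF : IsCondExp e F) {x : V} (hx : 0 ≤ x) :
    0 ≤ F x := by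
  rcases hx.lt_or_eq with hx | rfl
  · exact (hF.2.1 x hx).le
  · rw [map_zero]

theorem IsBandProj.le_sub_inf_nsmul_add [AddLeftMono V] {P : V →ₗ[ℝ] V} (hP : IsBandProj P)
    (x e : V) (n : ℕ) : P x ≤ (x - x ⊓ n • e) + n • P e := by
  have htail : P (x - x ⊓ n • e) ≤ x - x ⊓ n • e := (hP.2 _ (sub_nonneg.mpr inf_le_left)).2
  have htrunc : P (x ⊓ n • e) ≤ n • P e := by
    simpa only [map_nsmul] using
      monotone_of_map_nonneg (fun y hy => (hP.2 y hy).1) (inf_le_right : x ⊓ n • e ≤ n • e)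
  calc P x = P (x - x ⊓ n • e) + P (x ⊓ n • e) := by rw [← map_add, sub_add_cancel]
    _ ≤ (x - x ⊓ n • e) + n • P e := add_le_add htail htrunc

theorem exists_pos_forall_isBandProj_lt [AddLeftMono V] {ψ : V →ₗ[ℝ] ℝ} (hψ : Monotone ψ)
    {x e : V} (htail : Tendsto (fun n : ℕ => ψ (x - x ⊓ n • e)) atTop (𝓝 0)) :
    ∀ ε > 0, ∃ δ > 0, ∀ P : V →ₗ[ℝ] V, IsBandProj P → ψ (P e) < δ → ψ (P x) < ε := by
  intro ε hε
  obtain ⟨N, hN⟩ := (htail.eventually (gt_mem_nhds (half_pos hε))).exists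
  refine ⟨ε / (2 * (N + 1)), by positivity, fun P hP hPe => ?_⟩
  have hbound : ψ (P x) ≤ ψ (x - x ⊓ N • e) + N * ψ (P e) := by
    simpa only [map_add, map_nsmul, nsmul_eq_mul] using hψ (hP.le_sub_inf_nsmul_add x e N)
  have hscaled : (N : ℝ) * ψ (P e) < ε / 2 :=
    calc (N : ℝ) * ψ (P e) ≤ N * (ε / (2 * (N + 1))) := by gcongr
      _ < ε / 2 := by
        rw [mul_div_assoc', div_lt_div_iff₀ (by positivity) two_pos]
        nlinarith
  linarith

theorem tendsto_condExp_sub_inf_nsmul [AddLeftMono V] {e : V} (he : IsWeakUnit e)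
    {F : V →ₗ[ℝ] V} (hF : IsCondExp e F) {φ : V →ₗ[ℝ] ℝ} (hφ : IsNormedFunctional e φ)
    {x : V} (hx : 0 ≤ x) : Tendsto (fun n : ℕ => φ (F (x - x ⊓ n • e))) atTop (𝓝 0) :=
  hφ.2.2 _ ((monotone_of_map_nonneg fun _ => hF.map_nonneg).comp_antitone
      (antitone_sub_inf_nsmul x he.1.le))
    (hF.2.2.2 _ (antitone_sub_inf_nsmul x he.1.le) (isGLB_range_sub_inf_nsmul (he.2 x hx)))

end BandProjection

theorem small_on_unit_implies_small_general
    (e : E) (he : IsWeakUnit e)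
    (F : E →ₗ[ℝ] E) (hF : IsCondExp e F)
    (φ : E →ₗ[ℝ] ℝ) (hφ : IsNormedFunctional e φ)
    (X : E) (hX : 0 ≤ X)
    (P : ℝ → (E →ₗ[ℝ] E)) (hP : ∀ t : ℝ, 0 ≤ t → IsBandProj (P t)) :
    ∀ ε > 0, ∃ δ > 0, ∀ t : ℝ, 0 ≤ t →
      φ (F |P t e|) < δ → φ (F |P t X|) < ε := by
  have hψ : Monotone (φ ∘ₗ F) :=
    monotone_of_map_nonneg fun _ hx => hφ.1 _ (hF.map_nonneg hx)
  intro ε hε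
  obtain ⟨δ, hδ, hsmall⟩ :=
    exists_pos_forall_isBandProj_lt hψ (tendsto_condExp_sub_inf_nsmul he hF hφ hX) ε hε
  refine ⟨δ, hδ, fun t ht hPe => ?_⟩
  rw [abs_of_nonneg ((hP t ht).2 e he.1.le).1] at hPe
  rw [abs_of_nonneg ((hP t ht).2 X hX).1]
  exact hsmall (P t) (hP t ht) hPe

/-- For `0 ≤ X` and a family of band projections `(P t)`, given `ε > 0` there is `δ > 0`
such that `p_φ(P_t e) < δ` implies `p_φ(P_t X) < ε`, where `p_φ = φ ∘ F ∘ |·|`. -/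
theorem small_on_unit_implies_small
    (hE : DedekindComplete E) (e : E) (he : IsWeakUnit e)
    (F : E →ₗ[ℝ] E) (hF : IsCondExp e F)
    (φ : E →ₗ[ℝ] ℝ) (hφ : IsNormedFunctional e φ)
    (X : E) (hX : 0 ≤ X)
    (P : ℝ → (E →ₗ[ℝ] E)) (hP : ∀ t : ℝ, 0 ≤ t → IsBandProj (P t)) :
    ∀ ε > 0, ∃ δ > 0, ∀ t : ℝ, 0 ≤ t →
      φ (F |P t e|) < δ → φ (F |P t X|) < ε :=
  small_on_unit_implies_small_general e he F hF φ hφ X hX P hP
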